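/- Let Δ_1, …, Δ_M be nonnegative random variables adapted to a filtration F_1 ⊆ … ⊆ F_M with E[Σ_{j=i}^{M} Δ_j | F_{i}] ≤ F almost surely for all i (where F ≥ 0 is a constant). Then E[(Σ_{i=1}^M Δ_i)^2] ≤ 2F^2. -/

import Mathlib

/-!
Write `S = ∑ Δᵢ` and `Rᵢ = ∑_{j ≥ i} Δⱼ`. Expanding the square gives `S² ≤ 2 ∑ Δᵢ Rᵢ`. Since `Δᵢ`
is `Fᵢ`-measurable and nonnegative, pulling it out of the conditional expectation gives
`E[Δᵢ Rᵢ] = E[Δᵢ E[Rᵢ | Fᵢ]] ≤ C E[Δᵢ]`, so `E[S²] ≤ 2 C E[S]`, and `E[S] = E[E[R₁ | F₁]] ≤ C`.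
-/

open MeasureTheory Finset

namespace Finset

theorem two_mul_sum_mul_sum_filter_le {ι R : Type*} [LinearOrder ι] [CommRing R]
    (s : Finset ι) (a : ι → R) :
    2 * ∑ i ∈ s, a i * ∑ j ∈ s with i ≤ j, a j = (∑ i ∈ s, a i) ^ 2 + ∑ i ∈ s, a i ^ 2 := by
  induction s using Finset.induction_on_max with
  | empty => simp
  | insert x t hlt ih =>
    have hx : x ∉ t := fun h => lt_irrefl x (hlt x h)
    have htail : ∀ i ∈ t, ∑ j ∈ insert x t with i ≤ j, a j = a x + ∑ j ∈ t with i ≤ j, a j := by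
      intro i hi
      rw [filter_insert, if_pos (hlt i hi).le, sum_insert (by simp [hx])]
    have hlast : ∑ j ∈ insert x t with x ≤ j, a j = a x := by
      rw [filter_insert, if_pos le_rfl, filter_false_of_mem fun j hj => not_le.2 (hlt j hj)]
      simp
    rw [sum_insert hx, hlast, sum_congr rfl fun i hi => by rw [htail i hi], sum_insert hx,
      sum_insert hx]
    simp only [mul_add, sum_add_distrib, ← sum_mul]
    linear_combination ih

theorem sq_sum_Icc_le_two_mul_sum_mul_sum_Icc {ι R : Type*} [LinearOrder ι] [LocallyFiniteOrder ι]
    [CommRing R] [LinearOrder R] [IsStrictOrderedRing R] (m n : ι) (a : ι → R) :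
    (∑ i ∈ Icc m n, a i) ^ 2 ≤ 2 * ∑ i ∈ Icc m n, a i * ∑ j ∈ Icc i n, a j := by
  have hfilter : ∀ i ∈ Icc m n, {j ∈ Icc m n | i ≤ j} = Icc i n := by
    intro i hi
    ext j
    simp only [mem_filter, mem_Icc] at hi ⊢
    constructor
    · rintro ⟨⟨-, hjn⟩, hij⟩; exact ⟨hij, hjn⟩
    · rintro ⟨hij, hjn⟩; exact ⟨⟨hi.1.trans hij, hjn⟩, hij⟩
  rw [← sum_congr rfl fun i hi => congrArg (a i * ∑ j ∈ ·, a j) (hfilter i hi),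
    two_mul_sum_mul_sum_filter_le]
  exact le_add_of_nonneg_right (sum_nonneg fun i _ => sq_nonneg (a i))

end Finset

section

variable {Ω : Type*} {m m0 : MeasurableSpace Ω} {μ : Measure Ω}

theorem integral_mul_le_of_condExp_le (hm : m ≤ m0) [SigmaFinite (μ.trim hm)] {X Y : Ω → ℝ}
    {c : ℝ} (hX : StronglyMeasurable[m] X) (hX_nonneg : 0 ≤ᵐ[μ] X) (hX_int : Integrable X μ)
    (hY_int : Integrable Y μ) (hXY_int : Integrable (X * Y) μ) (hYc : ∀ᵐ ω ∂μ, μ[Y|m] ω ≤ c) :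
    ∫ ω, X ω * Y ω ∂μ ≤ c * ∫ ω, X ω ∂μ := by
  have hpull : μ[X * Y|m] =ᵐ[μ] X * μ[Y|m] :=
    condExp_mul_of_stronglyMeasurable_left hX hXY_int hY_int
  calc ∫ ω, X ω * Y ω ∂μ = ∫ ω, (μ[X * Y|m]) ω ∂μ := (integral_condExp hm).symm
    _ = ∫ ω, X ω * (μ[Y|m]) ω ∂μ := integral_congr_ae hpull
    _ ≤ ∫ ω, c * X ω ∂μ := by
        refine integral_mono_ae (integrable_condExp.congr hpull) (hX_int.const_mul c) ?_
        filter_upwards [hX_nonneg, hYc] with ω hXω hYω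
        rw [mul_comm c]
        exact mul_le_mul_of_nonneg_left hYω hXω
    _ = c * ∫ ω, X ω ∂μ := integral_const_mul c _

theorem integral_le_of_condExp_le [IsProbabilityMeasure μ] (hm : m ≤ m0) {Y : Ω → ℝ} {c : ℝ}
    (hYc : ∀ᵐ ω ∂μ, μ[Y|m] ω ≤ c) : ∫ ω, Y ω ∂μ ≤ c := by
  calc ∫ ω, Y ω ∂μ = ∫ ω, (μ[Y|m]) ω ∂μ := (integral_condExp hm).symm
    _ ≤ ∫ _, c ∂μ := integral_mono_ae integrable_condExp (integrable_const c) hYc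
    _ = c := by simp

theorem memLp_sum_of_subset {ι : Type*} {s t : Finset ι} (hst : s ⊆ t) {f : ι → Ω → ℝ}
    (hf_nonneg : ∀ i ω, 0 ≤ f i ω) (hf : ∀ i ∈ s, AEStronglyMeasurable (f i) μ)
    {p : ENNReal} (ht : MemLp (fun ω => ∑ i ∈ t, f i ω) p μ) :
    MemLp (fun ω => ∑ i ∈ s, f i ω) p μ := by
  refine ht.mono' (Finset.aestronglyMeasurable_fun_sum s hf) (ae_of_all _ fun ω => ?_)
  rw [Real.norm_of_nonneg (sum_nonneg fun i _ => hf_nonneg i ω)]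
  exact sum_le_sum_of_subset_of_nonneg hst fun i _ _ => hf_nonneg i ω

theorem integral_sq_sum_Icc_le {ι : Type*} [LinearOrder ι] [LocallyFiniteOrder ι]
    {f : ι → Ω → ℝ} (m n : ι)
    (hsq : Integrable (fun ω => (∑ i ∈ Icc m n, f i ω) ^ 2) μ)
    (hf : ∀ i ∈ Icc m n, Integrable (fun ω => f i ω * ∑ j ∈ Icc i n, f j ω) μ) :
    ∫ ω, (∑ i ∈ Icc m n, f i ω) ^ 2 ∂μ
      ≤ 2 * ∑ i ∈ Icc m n, ∫ ω, f i ω * ∑ j ∈ Icc i n, f j ω ∂μ := by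
  rw [← integral_finsetSum _ hf, ← integral_const_mul]
  exact integral_mono hsq ((integrable_finsetSum _ hf).const_mul 2)
    fun ω => sq_sum_Icc_le_two_mul_sum_mul_sum_Icc m n (f · ω)

end

theorem stmt_1_general {Ω : Type*} {m0 : MeasurableSpace Ω} (P : Measure Ω) [IsProbabilityMeasure P]
    (M : ℕ) (F : ℕ → MeasurableSpace Ω) (hF_le : ∀ i, F i ≤ m0)
    (Δ : ℕ → Ω → ℝ) (hΔ_nonneg : ∀ i ω, 0 ≤ Δ i ω)
    (hΔ_meas : ∀ i, StronglyMeasurable[F i] (Δ i))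
    (C : ℝ)
    (hcond : ∀ i ∈ Finset.Icc 1 M,
      ∀ᵐ ω ∂P, (P[fun ω' => ∑ j ∈ Finset.Icc i M, Δ j ω' | F i]) ω ≤ C) :
    ∫ ω, (∑ i ∈ Finset.Icc 1 M, Δ i ω) ^ 2 ∂P ≤ 2 * C ^ 2 := by
  rcases M.eq_zero_or_pos with rfl | hM
  · simp; positivity
  set S : Ω → ℝ := fun ω => ∑ i ∈ Icc 1 M, Δ i ω
  by_cases hS2 : Integrable (fun ω => S ω ^ 2) P
  swap
  · rw [integral_undef hS2]; positivity
  have hΔ_aesm (i : ℕ) : AEStronglyMeasurable (Δ i) P :=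
    ((hΔ_meas i).mono (hF_le i)).aestronglyMeasurable
  have hS : MemLp S 2 P :=
    (memLp_two_iff_integrable_sq (aestronglyMeasurable_fun_sum _ fun i _ => hΔ_aesm i)).2 hS2
  have hΔ (i) (hi : i ∈ Icc 1 M) : MemLp (Δ i) 2 P := by
    simpa using memLp_sum_of_subset (singleton_subset_iff.2 hi) hΔ_nonneg
      (by simpa using hΔ_aesm i) hS
  have hR (i) (hi : i ∈ Icc 1 M) : MemLp (fun ω => ∑ j ∈ Icc i M, Δ j ω) 2 P :=
    memLp_sum_of_subset (Icc_subset_Icc_left (mem_Icc.1 hi).1) hΔ_nonneg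
      (fun j _ => hΔ_aesm j) hS
  have hΔ_int (i) (hi : i ∈ Icc 1 M) : Integrable (Δ i) P := (hΔ i hi).integrable one_le_two
  have hmean : ∫ ω, S ω ∂P ≤ C :=
    integral_le_of_condExp_le (hF_le 1) (hcond 1 (mem_Icc.2 ⟨le_rfl, hM⟩))
  have hmean_nonneg : 0 ≤ ∫ ω, S ω ∂P :=
    integral_nonneg fun ω => sum_nonneg fun i _ => hΔ_nonneg i ω
  calc ∫ ω, S ω ^ 2 ∂P
      ≤ 2 * ∑ i ∈ Icc 1 M, ∫ ω, Δ i ω * ∑ j ∈ Icc i M, Δ j ω ∂P :=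
        integral_sq_sum_Icc_le 1 M hS2 fun i hi => (hΔ i hi).integrable_mul (hR i hi)
    _ ≤ 2 * ∑ i ∈ Icc 1 M, C * ∫ ω, Δ i ω ∂P := by
        gcongr with i hi
        exact integral_mul_le_of_condExp_le (hF_le i) (hΔ_meas i) (ae_of_all _ (hΔ_nonneg i))
          (hΔ_int i hi) ((hR i hi).integrable one_le_two) ((hΔ i hi).integrable_mul (hR i hi))
          (hcond i hi)
    _ = 2 * C * ∫ ω, S ω ∂P := by rw [← mul_sum, ← integral_finsetSum _ hΔ_int, mul_assoc]
    _ ≤ 2 * C ^ 2 := by nlinarith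

theorem stmt_1 {Ω : Type*} {m0 : MeasurableSpace Ω} (P : Measure Ω) [IsProbabilityMeasure P]
    (M : ℕ) (F : ℕ → MeasurableSpace Ω) (hF_le : ∀ i, F i ≤ m0)
    (hF_mono : ∀ i j, i ≤ j → F i ≤ F j)
    (Δ : ℕ → Ω → ℝ) (hΔ_nonneg : ∀ i ω, 0 ≤ Δ i ω)
    (hΔ_meas : ∀ i, StronglyMeasurable[F i] (Δ i))
    (C : ℝ) (hC : 0 ≤ C)
    (hcond : ∀ i ∈ Finset.Icc 1 M,
      ∀ᵐ ω ∂P, (P[fun ω' => ∑ j ∈ Finset.Icc i M, Δ j ω' | F i]) ω ≤ C) :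
    ∫ ω, (∑ i ∈ Finset.Icc 1 M, Δ i ω) ^ 2 ∂P ≤ 2 * C ^ 2 :=
  stmt_1_general P M F hF_le Δ hΔ_nonneg hΔ_meas C hcond
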